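/- arXiv:2405.16541 — 3 statements merged into one kernel-verified Lean document; each statement's English description precedes it below -/
import Mathlib

section
/- Let d ≥ 1 be an integer and v ≥ 0 a real number. For all real numbers 0 ≤ x₁ ≤ x₂ and 0 ≤ y₂ ≤ y₁, the cost c_RLF satisfies the submodularity inequality c_RLF(x₁, y₁) + c_RLF(x₂, y₂) ≤ c_RLF(x₁, y₂) + c_RLF(x₂, y₁). Equivalently, the double sum Σ_{k=0}^∞ (v^{2k}/(4^k k! Γ(k+d/2))) Σ_{i=0}^k binom(k,i) [(y₂²)^{k−i} − (y₁²)^{k−i}]·[(x₂²)^i − (x₁²)^i] is non-positive. -/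
noncomputable section

/-- The random Laplace feature cost function
`c_RLF(x,y) = Σ_k v^(2k) (x² + y²)^k / (4^k k! Γ(k + d/2))`. -/
def cRLF (d : ℕ) (v : ℝ) (x y : ℝ) : ℝ :=
  ∑' k : ℕ,
    v ^ (2 * k) * (x ^ 2 + y ^ 2) ^ k /
      (4 ^ k * (Nat.factorial k) * Real.Gamma ((k : ℝ) + d / 2))

open Finset

section BinomialCross

variable {R : Type*} [CommRing R]

theorem add_pow_add_add_pow_sub_eq_sum (A B C D : R) (k : ℕ) :
    (A + D) ^ k + (B + C) ^ k - ((A + C) ^ k + (B + D) ^ k) =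
      ∑ i ∈ range (k + 1), (k.choose i : R) * (C ^ (k - i) - D ^ (k - i)) * (B ^ i - A ^ i) := by
  simp only [add_pow, mul_sub, sub_mul, sum_sub_distrib]
  have swap : ∀ X Y : R, ∑ i ∈ range (k + 1), X ^ i * Y ^ (k - i) * (k.choose i : R) =
      ∑ i ∈ range (k + 1), (k.choose i : R) * Y ^ (k - i) * X ^ i :=
    fun X Y => sum_congr rfl fun i _ => by ring
  rw [swap A D, swap B C, swap A C, swap B D]
  ring

variable [LinearOrder R] [IsStrictOrderedRing R]

theorem sum_choose_mul_sub_pow_mul_sub_pow_nonpos {A B C D : R} (hA : 0 ≤ A) (hAB : A ≤ B)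
    (hC : 0 ≤ C) (hCD : C ≤ D) (k : ℕ) :
    ∑ i ∈ range (k + 1), (k.choose i : R) * (C ^ (k - i) - D ^ (k - i)) * (B ^ i - A ^ i) ≤ 0 :=
  sum_nonpos fun _ _ =>
    mul_nonpos_of_nonpos_of_nonneg
      (mul_nonpos_of_nonneg_of_nonpos (Nat.cast_nonneg _)
        (sub_nonpos.2 (pow_le_pow_left₀ hC hCD _)))
      (sub_nonneg.2 (pow_le_pow_left₀ hA hAB _))

theorem add_pow_add_add_pow_le {A B C D : R} (hA : 0 ≤ A) (hAB : A ≤ B) (hC : 0 ≤ C)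
    (hCD : C ≤ D) (k : ℕ) :
    (A + D) ^ k + (B + C) ^ k ≤ (A + C) ^ k + (B + D) ^ k := by
  have := sum_choose_mul_sub_pow_mul_sub_pow_nonpos hA hAB hC hCD k
  rw [← add_pow_add_add_pow_sub_eq_sum] at this
  exact sub_nonpos.1 this

end BinomialCross

theorem tsum_mul_pow_add_add_tsum_mul_pow_add_le {a : ℕ → ℝ} (ha : ∀ k, 0 ≤ a k)
    (hsum : ∀ s, Summable fun k => a k * s ^ k) {A B C D : ℝ} (hA : 0 ≤ A) (hAB : A ≤ B)
    (hC : 0 ≤ C) (hCD : C ≤ D) :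
    ∑' k, a k * (A + D) ^ k + ∑' k, a k * (B + C) ^ k ≤
      ∑' k, a k * (A + C) ^ k + ∑' k, a k * (B + D) ^ k := by
  rw [← (hsum _).tsum_add (hsum _), ← (hsum _).tsum_add (hsum _)]
  refine ((hsum _).add (hsum _)).tsum_le_tsum (fun k => ?_) ((hsum _).add (hsum _))
  rw [← mul_add, ← mul_add]
  exact mul_le_mul_of_nonneg_left (add_pow_add_add_pow_le hA hAB hC hCD k) (ha k)

def cRLFCoeff (d : ℕ) (v : ℝ) (k : ℕ) : ℝ :=
  v ^ (2 * k) / (4 ^ k * (Nat.factorial k) * Real.Gamma ((k : ℝ) + d / 2))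

theorem cRLF_eq_tsum (d : ℕ) (v x y : ℝ) :
    cRLF d v x y = ∑' k, cRLFCoeff d v k * (x ^ 2 + y ^ 2) ^ k := by
  unfold cRLF cRLFCoeff
  congr 1 with k
  ring

theorem cRLFCoeff_nonneg (d : ℕ) (v : ℝ) (k : ℕ) : 0 ≤ cRLFCoeff d v k := by
  have hGamma : 0 ≤ Real.Gamma ((k : ℝ) + d / 2) := Real.Gamma_nonneg_of_nonneg (by positivity)
  rw [cRLFCoeff, pow_mul]
  positivity

theorem one_le_Gamma_of_two_le {x : ℝ} (hx : 2 ≤ x) : 1 ≤ Real.Gamma x :=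
  Real.Gamma_two ▸ Real.Gamma_strictMonoOn_Ici.monotoneOn Set.self_mem_Ici hx hx

theorem summable_cRLFCoeff_mul_pow (d : ℕ) (v s : ℝ) :
    Summable fun k => cRLFCoeff d v k * s ^ k := by
  refine (Real.summable_pow_div_factorial (v ^ 2 * |s| / 4)).of_norm_bounded_eventually_nat
    (Filter.eventually_atTop.2 ⟨2, fun k hk => ?_⟩)
  have hGamma : 1 ≤ Real.Gamma ((k : ℝ) + d / 2) := by
    apply one_le_Gamma_of_two_le
    have : (2 : ℝ) ≤ k := by exact_mod_cast hk
    linarith [show (0 : ℝ) ≤ d / 2 by positivity]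
  have hexp : ‖cRLFCoeff d v k * s ^ k‖ =
      (v ^ 2 * |s| / 4) ^ k / (Nat.factorial k) / Real.Gamma ((k : ℝ) + d / 2) := by
    rw [norm_mul, norm_pow, Real.norm_of_nonneg (cRLFCoeff_nonneg d v k), Real.norm_eq_abs,
      cRLFCoeff, pow_mul, div_pow, mul_pow]
    ring
  rw [hexp]
  exact div_le_self (by positivity) hGamma

theorem cRLF_submodular_general (d : ℕ) (v : ℝ)
    (x₁ x₂ y₁ y₂ : ℝ) (hx₁ : 0 ≤ x₁) (hx : x₁ ≤ x₂) (hy₂ : 0 ≤ y₂) (hy : y₂ ≤ y₁) :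
    (cRLF d v x₁ y₁ + cRLF d v x₂ y₂ ≤ cRLF d v x₁ y₂ + cRLF d v x₂ y₁) ∧
      (∑' k : ℕ,
          v ^ (2 * k) / (4 ^ k * (Nat.factorial k) * Real.Gamma ((k : ℝ) + d / 2)) *
            ∑ i ∈ Finset.range (k + 1),
              (k.choose i : ℝ) * ((y₂ ^ 2) ^ (k - i) - (y₁ ^ 2) ^ (k - i)) *
                ((x₂ ^ 2) ^ i - (x₁ ^ 2) ^ i)) ≤ 0 := by
  have hA : 0 ≤ x₁ ^ 2 := sq_nonneg _
  have hAB : x₁ ^ 2 ≤ x₂ ^ 2 := pow_le_pow_left₀ hx₁ hx 2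
  have hC : 0 ≤ y₂ ^ 2 := sq_nonneg _
  have hCD : y₂ ^ 2 ≤ y₁ ^ 2 := pow_le_pow_left₀ hy₂ hy 2
  refine ⟨?_, tsum_nonpos fun k => mul_nonpos_of_nonneg_of_nonpos (cRLFCoeff_nonneg d v k)
    (sum_choose_mul_sub_pow_mul_sub_pow_nonpos hA hAB hC hCD k)⟩
  simp only [cRLF_eq_tsum]
  exact tsum_mul_pow_add_add_tsum_mul_pow_add_le (cRLFCoeff_nonneg d v)
    (summable_cRLFCoeff_mul_pow d v) hA hAB hC hCD

/-- The cost `c_RLF` is submodular: for `0 ≤ x₁ ≤ x₂` and `0 ≤ y₂ ≤ y₁`,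
`c_RLF(x₁,y₁) + c_RLF(x₂,y₂) ≤ c_RLF(x₁,y₂) + c_RLF(x₂,y₁)`; equivalently the corresponding
binomial double sum is non-positive. -/
theorem cRLF_submodular (d : ℕ) (hd : 1 ≤ d) (v : ℝ) (hv : 0 ≤ v)
    (x₁ x₂ y₁ y₂ : ℝ) (hx₁ : 0 ≤ x₁) (hx : x₁ ≤ x₂) (hy₂ : 0 ≤ y₂) (hy : y₂ ≤ y₁) :
    (cRLF d v x₁ y₁ + cRLF d v x₂ y₂ ≤ cRLF d v x₁ y₂ + cRLF d v x₂ y₁) ∧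
      (∑' k : ℕ,
          v ^ (2 * k) / (4 ^ k * (Nat.factorial k) * Real.Gamma ((k : ℝ) + d / 2)) *
            ∑ i ∈ Finset.range (k + 1),
              (k.choose i : ℝ) * ((y₂ ^ 2) ^ (k - i) - (y₁ ^ 2) ^ (k - i)) *
                ((x₂ ^ 2) ^ i - (x₁ ^ 2) ^ i)) ≤ 0 :=
  cRLF_submodular_general d v x₁ x₂ y₁ y₂ hx₁ hx hy₂ hy

end
end

section
/- Let d ≥ 1 be an integer. For every coupling μ of χ_d with itself, the negative monotone coupling μ_NM satisfies ∫ (x² + y²)² dμ_NM(x,y) ≤ ∫ (x² + y²)² dμ(x,y). That is, μ_NM minimizes the expected value of (x² + y²)² among all probability measures on ℝ × ℝ with both marginals equal to χ_d. -/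
/-!
Both marginals are `χ_d`, so in `∫ (x² + y²)² = ∫ x⁴ + ∫ y⁴ + 2 ∫ x²y²` only the cross moment
depends on the coupling. Since `χ_d` lives on `[0, ∞)`, Tonelli (Hoeffding's formula) writes
`∫ x²y² dμ` as the integral of the upper-orthant probabilities `μ (Ioi s ×ˢ Ioi t)` against
`ρ ⊗ ρ`, where `ρ (Iio x) = x²`. Every coupling satisfies the Fréchet–Hoeffding bound
`μ (Ioi s ×ˢ Ioi t) ≥ 1 - F s - F t`, and the negative monotone coupling attains it, because
`F⁻¹ u > s` and `F⁻¹ (1 - u) > t` hold exactly for `u ∈ (F s, 1 - F t)`.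
-/

open MeasureTheory ProbabilityTheory

noncomputable section

/-- The standard Gaussian measure on `ℝ^d` (the `d`-fold product of `N(0,1)`),
realized on `EuclideanSpace ℝ (Fin d)` so that the norm is the Euclidean norm. -/
def stdGaussian (d : ℕ) : Measure (EuclideanSpace ℝ (Fin d)) :=
  (Measure.pi fun _ : Fin d => gaussianReal 0 1).map
    (EuclideanSpace.equiv (Fin d) ℝ).symm

/-- The chi distribution with `d` degrees of freedom: the law of the Euclidean norm of a
standard Gaussian vector in `ℝ^d`. -/
def chi (d : ℕ) : Measure ℝ := (stdGaussian d).map fun x => ‖x‖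

/-- The cumulative distribution function of `χ_d`. -/
def chiCDF (d : ℕ) (x : ℝ) : ℝ := (chi d (Set.Iic x)).toReal

/-- The quantile function `F⁻¹(u) = inf {x : F x ≥ u}` of `χ_d`. -/
def chiQuantile (d : ℕ) (u : ℝ) : ℝ := sInf {x : ℝ | u ≤ chiCDF d x}

/-- The negative monotone coupling of `χ_d` with itself: the pushforward of the uniform
probability measure on `[0,1]` under `u ↦ (F⁻¹(u), F⁻¹(1 - u))`. -/
def muNM (d : ℕ) : Measure (ℝ × ℝ) :=
  ((volume : Measure ℝ).restrict (Set.Icc 0 1)).map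
    fun u => (chiQuantile d u, chiQuantile d (1 - u))

open Set Filter
open scoped ENNReal

def quantile (ν : Measure ℝ) (u : ℝ) : ℝ := sInf {x | u ≤ cdf ν x}

section Quantile

variable {ν : Measure ℝ} {u x : ℝ}

lemma bddBelow_setOf_le_cdf (hu : 0 < u) : BddBelow {x | u ≤ cdf ν x} := by
  obtain ⟨x₀, hx₀⟩ := eventually_atBot.1 ((tendsto_cdf_atBot ν).eventually (gt_mem_nhds hu))
  exact ⟨x₀, fun x hx => le_of_not_gt fun hlt => (hx₀ x hlt.le).not_ge hx⟩

lemma nonempty_setOf_le_cdf (hu : u < 1) : {x | u ≤ cdf ν x}.Nonempty :=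
  ((tendsto_cdf_atTop ν).eventually (eventually_ge_nhds hu)).exists

lemma le_cdf_quantile (hu : u ∈ Ioo 0 1) : u ≤ cdf ν (quantile ν u) := by
  have hbdd := bddBelow_setOf_le_cdf (ν := ν) hu.1
  have hne := nonempty_setOf_le_cdf (ν := ν) hu.2
  have h_right : ∀ y ∈ Ioi (quantile ν u), u ≤ cdf ν y := fun y hy => by
    obtain ⟨z, hz, hzy⟩ := (csInf_lt_iff hbdd hne).1 hy
    exact hz.trans (monotone_cdf ν hzy.le)
  have h_cont := ((cdf ν).right_continuous (quantile ν u)).mono_left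
    (nhdsWithin_mono _ Ioi_subset_Ici_self)
  exact ge_of_tendsto h_cont (eventually_nhdsWithin_of_forall h_right)

lemma quantile_le_iff (hu : u ∈ Ioo 0 1) : quantile ν u ≤ x ↔ u ≤ cdf ν x :=
  ⟨fun h => (le_cdf_quantile hu).trans (monotone_cdf ν h),
    fun h => csInf_le (bddBelow_setOf_le_cdf hu.1) h⟩

lemma lt_quantile_iff (hu : u ∈ Ioo 0 1) : x < quantile ν u ↔ cdf ν x < u := by
  simpa only [not_le] using (quantile_le_iff (x := x) hu).not

lemma monotoneOn_quantile : MonotoneOn (quantile ν) (Ioo 0 1) :=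
  fun _ hu _ hv huv => (quantile_le_iff hu).2 (huv.trans (le_cdf_quantile hv))

lemma aemeasurable_quantile : AEMeasurable (quantile ν) (volume.restrict (Ioo 0 1)) :=
  aemeasurable_restrict_of_monotoneOn measurableSet_Ioo monotoneOn_quantile

lemma volume_Ioo_zero_one_inter_Iic {c : ℝ} (hc : c ≤ 1) :
    volume (Ioo 0 1 ∩ Iic c) = ENNReal.ofReal c := by
  have h_lower : Ioo 0 c ⊆ Ioo 0 1 ∩ Iic c := fun u hu => ⟨⟨hu.1, hu.2.trans_le hc⟩, hu.2.le⟩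
  have h_upper : Ioo 0 1 ∩ Iic c ⊆ Icc 0 c := fun u hu => ⟨hu.1.1.le, hu.2⟩
  refine le_antisymm ((measure_mono h_upper).trans_eq ?_) ((measure_mono h_lower).trans_eq' ?_) <;>
    simp only [Real.volume_Icc, Real.volume_Ioo, sub_zero]

lemma map_quantile [IsProbabilityMeasure ν] : (volume.restrict (Ioo 0 1)).map (quantile ν) = ν := by
  refine Measure.ext_of_Iic _ _ fun x => ?_
  rw [Measure.map_apply_of_aemeasurable aemeasurable_quantile measurableSet_Iic,
    Measure.restrict_apply' measurableSet_Ioo, inter_comm, ← ofReal_cdf,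
    ← volume_Ioo_zero_one_inter_Iic (cdf_le_one ν x)]
  congr 1
  ext u
  exact and_congr_right fun hu => quantile_le_iff hu

end Quantile

lemma one_sub_sub_le_measureReal_prod {α β : Type*} [MeasurableSpace α] [MeasurableSpace β]
    (μ : Measure (α × β)) [IsProbabilityMeasure μ] {s : Set α} {t : Set β}
    (hs : MeasurableSet s) (ht : MeasurableSet t) :
    1 - (μ.map Prod.fst).real sᶜ - (μ.map Prod.snd).real tᶜ ≤ μ.real (s ×ˢ t) := by
  rw [map_measureReal_apply measurable_fst hs.compl, map_measureReal_apply measurable_snd ht.compl]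
  have hsplit := measureReal_add_measureReal_compl (μ := μ) (hs.prod ht)
  have hunion := measureReal_union_le (μ := μ) (Prod.fst ⁻¹' sᶜ) (Prod.snd ⁻¹' tᶜ)
  rw [compl_prod_eq_union, prod_univ, univ_prod, probReal_univ] at hsplit
  linarith

def antitoneCoupling (ν₁ ν₂ : Measure ℝ) : Measure (ℝ × ℝ) :=
  (volume.restrict (Ioo 0 1)).map fun u => (quantile ν₁ u, quantile ν₂ (1 - u))

section AntitoneCoupling

variable {ν₁ ν₂ : Measure ℝ}

instance : SFinite (antitoneCoupling ν₁ ν₂) := by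
  unfold antitoneCoupling
  infer_instance

lemma measurePreserving_one_sub :
    MeasurePreserving (fun u : ℝ => 1 - u) (volume.restrict (Ioo 0 1))
      (volume.restrict (Ioo 0 1)) := by
  have h := (Measure.measurePreserving_sub_left volume (1 : ℝ)).restrict_preimage
    (measurableSet_Ioo (a := 0) (b := 1))
  rwa [preimage_const_sub_Ioo, sub_zero, sub_self] at h

lemma aemeasurable_quantile_one_sub :
    AEMeasurable (fun u => (quantile ν₁ u, quantile ν₂ (1 - u))) (volume.restrict (Ioo 0 1)) :=
  aemeasurable_quantile.prodMk (aemeasurable_quantile.comp_quasiMeasurePreserving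
    measurePreserving_one_sub.quasiMeasurePreserving)

lemma antitoneCoupling_map_fst [IsProbabilityMeasure ν₁] :
    (antitoneCoupling ν₁ ν₂).map Prod.fst = ν₁ := by
  rw [antitoneCoupling, AEMeasurable.map_map_of_aemeasurable measurable_fst.aemeasurable
    aemeasurable_quantile_one_sub]
  exact map_quantile

lemma antitoneCoupling_map_snd [IsProbabilityMeasure ν₂] :
    (antitoneCoupling ν₁ ν₂).map Prod.snd = ν₂ := by
  have hmap := measurePreserving_one_sub.map_eq
  rw [antitoneCoupling, AEMeasurable.map_map_of_aemeasurable measurable_snd.aemeasurable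
    aemeasurable_quantile_one_sub]
  calc _ = ((volume.restrict (Ioo 0 1)).map (fun u : ℝ => 1 - u)).map (quantile ν₂) :=
        (AEMeasurable.map_map_of_aemeasurable (by rw [hmap]; exact aemeasurable_quantile)
          measurePreserving_one_sub.measurable.aemeasurable).symm
    _ = ν₂ := by rw [hmap, map_quantile]

lemma antitoneCoupling_Ioi_prod_Ioi (x y : ℝ) :
    antitoneCoupling ν₁ ν₂ (Ioi x ×ˢ Ioi y) = ENNReal.ofReal (1 - cdf ν₁ x - cdf ν₂ y) := by
  rw [antitoneCoupling, Measure.map_apply_of_aemeasurable aemeasurable_quantile_one_sub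
    (measurableSet_Ioi.prod measurableSet_Ioi), Measure.restrict_apply' measurableSet_Ioo]
  have hset : (fun u => (quantile ν₁ u, quantile ν₂ (1 - u))) ⁻¹' (Ioi x ×ˢ Ioi y) ∩ Ioo 0 1
      = Ioo (cdf ν₁ x) (1 - cdf ν₂ y) := by
    ext u
    simp only [mem_inter_iff, mem_preimage, mem_prod, mem_Ioi, mem_Ioo]
    constructor
    · rintro ⟨⟨h₁, h₂⟩, hu⟩
      have hu' : 1 - u ∈ Ioo 0 1 := ⟨by linarith [hu.2], by linarith [hu.1]⟩
      rw [lt_quantile_iff hu] at h₁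
      rw [lt_quantile_iff hu'] at h₂
      exact ⟨h₁, by linarith⟩
    · rintro ⟨h₁, h₂⟩
      have hu : u ∈ Ioo 0 1 :=
        ⟨(cdf_nonneg ν₁ x).trans_lt h₁, by linarith [cdf_nonneg ν₂ y]⟩
      have hu' : 1 - u ∈ Ioo 0 1 := ⟨by linarith [hu.2], by linarith [hu.1]⟩
      exact ⟨⟨(lt_quantile_iff hu).2 h₁, (lt_quantile_iff hu').2 (by linarith)⟩, hu⟩
  rw [hset, Real.volume_Ioo, sub_sub, sub_sub, add_comm]

lemma antitoneCoupling_Ioi_prod_Ioi_le [IsProbabilityMeasure ν₁] [IsProbabilityMeasure ν₂]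
    (μ : Measure (ℝ × ℝ)) [IsProbabilityMeasure μ] (h₁ : μ.map Prod.fst = ν₁)
    (h₂ : μ.map Prod.snd = ν₂) (x y : ℝ) :
    antitoneCoupling ν₁ ν₂ (Ioi x ×ˢ Ioi y) ≤ μ (Ioi x ×ˢ Ioi y) := by
  rw [antitoneCoupling_Ioi_prod_Ioi, ENNReal.ofReal_le_iff_le_toReal (measure_ne_top _ _),
    ← measureReal_def]
  simpa only [cdf_eq_real, h₁, h₂, compl_Ioi] using
    one_sub_sub_le_measureReal_prod μ measurableSet_Ioi measurableSet_Ioi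

end AntitoneCoupling

lemma lintegral_measure_Iio_mul_measure_Iio (κ : Measure (ℝ × ℝ)) [SFinite κ]
    (ρ₁ ρ₂ : Measure ℝ) [SFinite ρ₁] [SFinite ρ₂] :
    ∫⁻ p, ρ₁ (Iio p.1) * ρ₂ (Iio p.2) ∂κ = ∫⁻ q, κ (Ioi q.1 ×ˢ Ioi q.2) ∂(ρ₁.prod ρ₂) := by
  have hS : MeasurableSet {z : (ℝ × ℝ) × (ℝ × ℝ) | z.2.1 < z.1.1 ∧ z.2.2 < z.1.2} :=
    (measurableSet_lt measurable_snd.fst measurable_fst.fst).inter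
      (measurableSet_lt measurable_snd.snd measurable_fst.snd)
  calc ∫⁻ p, ρ₁ (Iio p.1) * ρ₂ (Iio p.2) ∂κ
      = κ.prod (ρ₁.prod ρ₂) {z | z.2.1 < z.1.1 ∧ z.2.2 < z.1.2} := by
        simp_rw [Measure.prod_apply hS, ← Measure.prod_prod]
        rfl
    _ = _ := by
        rw [Measure.prod_apply_symm hS]
        rfl

lemma lintegral_measure_Iio_mul_le_of_Ioi_prod_le {κ κ' : Measure (ℝ × ℝ)} [SFinite κ] [SFinite κ']
    (ρ₁ ρ₂ : Measure ℝ) [SFinite ρ₁] [SFinite ρ₂]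
    (h : ∀ x y, κ (Ioi x ×ˢ Ioi y) ≤ κ' (Ioi x ×ˢ Ioi y)) :
    ∫⁻ p, ρ₁ (Iio p.1) * ρ₂ (Iio p.2) ∂κ ≤ ∫⁻ p, ρ₁ (Iio p.1) * ρ₂ (Iio p.2) ∂κ' := by
  simpa only [lintegral_measure_Iio_mul_measure_Iio] using lintegral_mono fun q : ℝ × ℝ => h q.1 q.2

lemma exists_measure_Iio_eq_ofReal_sq :
    ∃ ρ : Measure ℝ, SFinite ρ ∧ ∀ x, ρ (Iio x) = ENNReal.ofReal x ^ 2 := by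
  refine ⟨(volume.restrict (Ioi 0)).map Real.sqrt, inferInstance, fun x => ?_⟩
  rw [Measure.map_apply Real.continuous_sqrt.measurable measurableSet_Iio,
    Measure.restrict_apply' measurableSet_Ioi]
  rcases le_or_gt x 0 with hx | hx
  · have hempty : Real.sqrt ⁻¹' Iio x ∩ Ioi 0 = ∅ :=
      eq_empty_of_forall_notMem fun s hs => (hs.1 : √s < x).not_ge (hx.trans (Real.sqrt_nonneg s))
    rw [hempty, measure_empty, ENNReal.ofReal_of_nonpos hx, zero_pow two_ne_zero]
  · have hIoo : Real.sqrt ⁻¹' Iio x ∩ Ioi 0 = Ioo 0 (x ^ 2) := by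
      ext s
      simp [Real.sqrt_lt' hx, and_comm]
    rw [hIoo, Real.volume_Ioo, sub_zero, ENNReal.ofReal_pow hx.le]

lemma lintegral_quartic_eq (κ : Measure (ℝ × ℝ)) (h₁ : ∀ᵐ x ∂(κ.map Prod.fst), 0 ≤ x)
    (h₂ : ∀ᵐ x ∂(κ.map Prod.snd), 0 ≤ x) {ρ : Measure ℝ}
    (hρ : ∀ x, ρ (Iio x) = ENNReal.ofReal x ^ 2) :
    ∫⁻ p, ENNReal.ofReal ((p.1 ^ 2 + p.2 ^ 2) ^ 2) ∂κ
      = ∫⁻ x, ENNReal.ofReal x ^ 4 ∂(κ.map Prod.fst) + ∫⁻ x, ENNReal.ofReal x ^ 4 ∂(κ.map Prod.snd)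
        + 2 * ∫⁻ p, ρ (Iio p.1) * ρ (Iio p.2) ∂κ := by
  simp only [hρ]
  rw [lintegral_map (by fun_prop) measurable_fst, lintegral_map (by fun_prop) measurable_snd,
    ← lintegral_const_mul _ (by fun_prop), ← lintegral_add_left (by fun_prop),
    ← lintegral_add_left (by fun_prop)]
  refine lintegral_congr_ae ?_
  filter_upwards [ae_of_ae_map measurable_fst.aemeasurable h₁,
    ae_of_ae_map measurable_snd.aemeasurable h₂] with p hp₁ hp₂
  rw [ENNReal.ofReal_pow (by positivity), ENNReal.ofReal_add (by positivity) (by positivity),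
    ENNReal.ofReal_pow hp₁, ENNReal.ofReal_pow hp₂]
  ring

lemma lintegral_quartic_antitoneCoupling_le {ν : Measure ℝ} [IsProbabilityMeasure ν]
    (hν : ∀ᵐ x ∂ν, 0 ≤ x) (μ : Measure (ℝ × ℝ)) [IsProbabilityMeasure μ]
    (h₁ : μ.map Prod.fst = ν) (h₂ : μ.map Prod.snd = ν) :
    ∫⁻ p, ENNReal.ofReal ((p.1 ^ 2 + p.2 ^ 2) ^ 2) ∂(antitoneCoupling ν ν)
      ≤ ∫⁻ p, ENNReal.ofReal ((p.1 ^ 2 + p.2 ^ 2) ^ 2) ∂μ := by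
  obtain ⟨ρ, _, hρ⟩ := exists_measure_Iio_eq_ofReal_sq
  have hfst : (antitoneCoupling ν ν).map Prod.fst = ν := antitoneCoupling_map_fst
  have hsnd : (antitoneCoupling ν ν).map Prod.snd = ν := antitoneCoupling_map_snd
  rw [lintegral_quartic_eq _ (by rwa [hfst]) (by rwa [hsnd]) hρ,
    lintegral_quartic_eq _ (by rwa [h₁]) (by rwa [h₂]) hρ, hfst, hsnd, h₁, h₂]
  gcongr _ + 2 * ?_
  exact lintegral_measure_Iio_mul_le_of_Ioi_prod_le ρ ρ (antitoneCoupling_Ioi_prod_Ioi_le μ h₁ h₂)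

lemma integrable_quartic {κ : Measure (ℝ × ℝ)} (h₁ : Integrable (fun x => x ^ 4) (κ.map Prod.fst))
    (h₂ : Integrable (fun x => x ^ 4) (κ.map Prod.snd)) :
    Integrable (fun p : ℝ × ℝ => (p.1 ^ 2 + p.2 ^ 2) ^ 2) κ := by
  have i₁ := (integrable_map_measure (by fun_prop) measurable_fst.aemeasurable).1 h₁
  have i₂ := (integrable_map_measure (by fun_prop) measurable_snd.aemeasurable).1 h₂
  refine ((i₁.add i₂).const_mul 2).mono' (by fun_prop) (ae_of_all _ fun p => ?_)
  rw [Real.norm_of_nonneg (by positivity)]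
  simp only [Function.comp_apply, Pi.add_apply]
  nlinarith [sq_nonneg (p.1 ^ 2 - p.2 ^ 2)]

theorem integral_quartic_antitoneCoupling_le {ν : Measure ℝ} [IsProbabilityMeasure ν]
    (hν : ∀ᵐ x ∂ν, 0 ≤ x) (hν₄ : Integrable (fun x => x ^ 4) ν)
    (μ : Measure (ℝ × ℝ)) [IsProbabilityMeasure μ]
    (h₁ : μ.map Prod.fst = ν) (h₂ : μ.map Prod.snd = ν) :
    ∫ p, (p.1 ^ 2 + p.2 ^ 2) ^ 2 ∂(antitoneCoupling ν ν) ≤ ∫ p, (p.1 ^ 2 + p.2 ^ 2) ^ 2 ∂μ := by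
  have hnonneg (κ : Measure (ℝ × ℝ)) : 0 ≤ᵐ[κ] fun p : ℝ × ℝ => (p.1 ^ 2 + p.2 ^ 2) ^ 2 :=
    ae_of_all _ fun p => by positivity
  rw [integral_eq_lintegral_of_nonneg_ae (hnonneg _) (by fun_prop),
    integral_eq_lintegral_of_nonneg_ae (hnonneg _) (by fun_prop)]
  exact ENNReal.toReal_mono (integrable_quartic (h₁ ▸ hν₄) (h₂ ▸ hν₄)).lintegral_lt_top.ne
    (lintegral_quartic_antitoneCoupling_le hν μ h₁ h₂)

lemma stdGaussian_eq_stdGaussian_euclideanSpace (d : ℕ) :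
    _root_.stdGaussian d = ProbabilityTheory.stdGaussian (EuclideanSpace ℝ (Fin d)) :=
  map_pi_eq_stdGaussian

instance (d : ℕ) : IsProbabilityMeasure (chi d) := by
  rw [chi, stdGaussian_eq_stdGaussian_euclideanSpace]
  exact Measure.isProbabilityMeasure_map measurable_norm.aemeasurable

lemma ae_nonneg_chi {d : ℕ} : ∀ᵐ x ∂(chi d), 0 ≤ x :=
  (ae_map_iff measurable_norm.aemeasurable measurableSet_Ici).2 (ae_of_all _ norm_nonneg)

lemma integrable_pow_four_chi {d : ℕ} : Integrable (fun x => x ^ 4) (chi d) := by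
  rw [chi, integrable_map_measure (by fun_prop) measurable_norm.aemeasurable,
    stdGaussian_eq_stdGaussian_euclideanSpace]
  exact (IsGaussian.memLp_id _ (4 : ℕ) (by norm_num)).integrable_norm_pow (by norm_num)

lemma chiQuantile_eq_quantile (d : ℕ) : chiQuantile d = quantile (chi d) := by
  ext u
  simp only [chiQuantile, chiCDF, quantile, cdf_eq_real, measureReal_def]

lemma muNM_eq_antitoneCoupling (d : ℕ) : muNM d = antitoneCoupling (chi d) (chi d) := by
  rw [muNM, antitoneCoupling, chiQuantile_eq_quantile, Measure.restrict_congr_set Ioo_ae_eq_Icc]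

theorem negativeMonotone_minimizes_quartic_general (d : ℕ)
    (μ : Measure (ℝ × ℝ)) [IsProbabilityMeasure μ]
    (h1 : μ.map Prod.fst = chi d) (h2 : μ.map Prod.snd = chi d) :
    ∫ p, (p.1 ^ 2 + p.2 ^ 2) ^ 2 ∂(muNM d) ≤ ∫ p, (p.1 ^ 2 + p.2 ^ 2) ^ 2 ∂μ := by
  rw [muNM_eq_antitoneCoupling]
  exact integral_quartic_antitoneCoupling_le ae_nonneg_chi integrable_pow_four_chi μ h1 h2

/-- Among all couplings of `χ_d` with itself, the negative monotone coupling minimizes the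
expected value of `(x² + y²)²`. -/
theorem negativeMonotone_minimizes_quartic (d : ℕ) (hd : 1 ≤ d)
    (μ : Measure (ℝ × ℝ)) [IsProbabilityMeasure μ]
    (h1 : μ.map Prod.fst = chi d) (h2 : μ.map Prod.snd = chi d) :
    ∫ p, (p.1 ^ 2 + p.2 ^ 2) ^ 2 ∂(muNM d) ≤ ∫ p, (p.1 ^ 2 + p.2 ^ 2) ^ 2 ∂μ :=
  negativeMonotone_minimizes_quartic_general d μ h1 h2
end
end

section
/- Let d ≥ 1 be an integer and z ∈ ℝ^d. Then the average of cos⟨u, z⟩ over the unit sphere equals the Bessel-type power series: ∫_{S^{d−1}} cos⟨u, z⟩ dσ_{d−1}(u) = Σ_{k=0}^∞ (−1)^k ‖z‖^{2k} · Γ(d/2) / (4^k · k! · Γ(k + d/2)). -/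
/-!
Rotation invariance makes `∫ ⟪u, x⟫ⁿ dσ(u)` equal to `‖x‖ⁿ Mₙ`, where `Mₙ = ∫ ⟪u, e⟫ⁿ dσ(u)` for any
unit vector `e`. Averaging `⟪u, x⟫²ᵏ e^{-‖x‖²}` over `u ∈ S^{d-1}` and `x ∈ ℝ^d` in both orders
(Lebesgue measure is rotation invariant too) gives `∫ x_i²ᵏ e^{-‖x‖²} dx = M₂ₖ ∫ ‖x‖²ᵏ e^{-‖x‖²} dx`. The left side is a product of
one-dimensional Gaussian moments, the right side a radial integral, and the quotient is
`M₂ₖ = (2k)! Γ(d/2) / (4ᵏ k! Γ(k + d/2))`. Integrating the cosine series term by term concludes.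
-/

open MeasureTheory

noncomputable section

/-- The restriction of a linear isometric equivalence of `ℝ^d` to the unit sphere. -/
def sphereMap (d : ℕ) (f : EuclideanSpace ℝ (Fin d) ≃ₗᵢ[ℝ] EuclideanSpace ℝ (Fin d))
    (x : Metric.sphere (0 : EuclideanSpace ℝ (Fin d)) 1) :
    Metric.sphere (0 : EuclideanSpace ℝ (Fin d)) 1 :=
  ⟨f x.1, by
    have hx : ‖(x : EuclideanSpace ℝ (Fin d))‖ = 1 := by
      simp [mem_sphere_zero_iff_norm.mp x.2]
    exact mem_sphere_zero_iff_norm.mpr (by rw [f.norm_map, hx])⟩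

open Real Set
open scoped RealInnerProductSpace

lemma Real.Gamma_nat_add_half_eq_factorial (k : ℕ) :
    Gamma (k + 1 / 2) = (2 * k).factorial / (4 ^ k * k.factorial) * √π := by
  induction k with
  | zero => simp [-one_div, Gamma_one_half_eq]
  | succ n ih =>
    rw [Nat.cast_succ, add_right_comm, Gamma_add_one (by positivity), ih,
      show 2 * (n + 1) = 2 * n + 1 + 1 by ring]
    push_cast [Nat.factorial_succ]
    field_simp
    ring

lemma integrableOn_Ioi_pow_mul_exp_neg_sq (n : ℕ) :
    IntegrableOn (fun y : ℝ ↦ y ^ n * exp (-y ^ 2)) (Ioi 0) := by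
  refine (integrableOn_rpow_mul_exp_neg_rpow (s := n) (by linarith [n.cast_nonneg (α := ℝ)])
    two_pos).congr_fun (fun y _ ↦ ?_) measurableSet_Ioi
  simp only [rpow_natCast, rpow_two]

lemma integral_Ioi_pow_mul_exp_neg_sq (n : ℕ) :
    ∫ y in Ioi (0 : ℝ), y ^ n * exp (-y ^ 2) = Gamma ((n + 1) / 2) / 2 := by
  have h := integral_rpow_mul_exp_neg_rpow two_pos
    (by linarith [n.cast_nonneg (α := ℝ)] : (-1 : ℝ) < n)
  simp only [rpow_natCast, rpow_two] at h
  rw [h]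
  ring

lemma integral_pow_two_mul_mul_exp_neg_sq (k : ℕ) :
    ∫ t : ℝ, t ^ (2 * k) * exp (-t ^ 2) = Gamma (k + 1 / 2) := by
  have h_even (t : ℝ) : t ^ (2 * k) * exp (-t ^ 2) = |t| ^ (2 * k) * exp (-|t| ^ 2) := by
    rw [pow_mul, pow_mul |t|, sq_abs]
  rw [integral_congr_ae (.of_forall h_even),
    integral_comp_abs (f := fun t ↦ t ^ (2 * k) * exp (-t ^ 2)),
    integral_Ioi_pow_mul_exp_neg_sq]
  push_cast
  ring_nf

lemma integral_cos_eq_tsum {X : Type*} [MeasurableSpace X] {μ : Measure X} [IsFiniteMeasure μ]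
    {f : X → ℝ} (hf : AEStronglyMeasurable f μ) {C : ℝ} (hC : ∀ x, |f x| ≤ C) :
    ∫ x, cos (f x) ∂μ = ∑' k : ℕ, (-1) ^ k / (2 * k).factorial * ∫ x, f x ^ (2 * k) ∂μ := by
  let F (k : ℕ) (x : X) : ℝ := (-1) ^ k / (2 * k).factorial * f x ^ (2 * k)
  have h_bound (k : ℕ) (x : X) : ‖F k x‖ ≤ C ^ (2 * k) / (2 * k).factorial := by
    simp only [F, norm_div, norm_mul, norm_pow, norm_neg, norm_one, one_pow, one_div,
      Real.norm_eq_abs, Nat.abs_cast, ← div_eq_inv_mul]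
    gcongr
    exact hC x
  have h_int (k : ℕ) : Integrable (F k) μ :=
    .of_bound ((hf.pow _).const_mul _) _ (.of_forall (h_bound k))
  have h_sum : Summable fun k ↦ ∫ x, ‖F k x‖ ∂μ := by
    refine .of_nonneg_of_le (fun k ↦ integral_nonneg fun x ↦ norm_nonneg _) (fun k ↦ ?_)
      ((hasSum_cosh C).summable.mul_right (μ.real univ))
    refine (Real.le_norm_self _).trans (norm_integral_le_of_norm_le_const (.of_forall fun x ↦ ?_))
    rw [norm_norm]
    exact h_bound k x
  have h_cos (x : X) : cos (f x) = ∑' k, F k x := by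
    rw [← (hasSum_cos _).tsum_eq]
    exact tsum_congr fun k ↦ by ring
  simp_rw [h_cos, ← integral_tsum_of_summable_integral_norm h_int h_sum, F, integral_const_mul]

section InnerProductSpace

open Module

variable {E : Type*} [NormedAddCommGroup E] [InnerProductSpace ℝ E]

lemma exists_linearIsometryEquiv_apply_eq {a b : E} (hab : ‖a‖ = ‖b‖) :
    ∃ f : E ≃ₗᵢ[ℝ] E, f a = b :=
  ⟨Submodule.reflection (ℝ ∙ (a - b))ᗮ, Submodule.reflection_sub hab⟩

lemma abs_real_inner_le_norm_of_mem_sphere (u : Metric.sphere (0 : E) 1) (x : E) :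
    |⟪(u : E), x⟫| ≤ ‖x‖ := by
  simpa [norm_eq_of_mem_sphere] using abs_real_inner_le_norm (u : E) x

variable [FiniteDimensional ℝ E] [MeasurableSpace E] [BorelSpace E]

lemma integral_inner_norm_eq_of_norm_eq {a b : E} (hab : ‖a‖ = ‖b‖) (F : ℝ → ℝ → ℝ) :
    ∫ x : E, F ⟪a, x⟫ ‖x‖ = ∫ x : E, F ⟪b, x⟫ ‖x‖ := by
  obtain ⟨f, hf⟩ := exists_linearIsometryEquiv_apply_eq hab.symm
  rw [← f.measurePreserving.integral_comp f.toHomeomorph.measurableEmbedding, ← hf]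
  simp only [LinearIsometryEquiv.inner_map_map, LinearIsometryEquiv.norm_map]

variable [Nontrivial E]

lemma integrable_norm_pow_mul_exp_neg_norm_sq (n : ℕ) :
    Integrable (fun x : E ↦ ‖x‖ ^ n * exp (-‖x‖ ^ 2)) := by
  rw [integrable_fun_norm_addHaar volume (f := fun y ↦ y ^ n * exp (-y ^ 2))]
  refine (integrableOn_Ioi_pow_mul_exp_neg_sq (finrank ℝ E - 1 + n)).congr_fun
    (fun y _ ↦ ?_) measurableSet_Ioi
  simp only [smul_eq_mul, pow_add, mul_assoc]

lemma integral_norm_pow_mul_exp_neg_norm_sq (n : ℕ) :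
    ∫ x : E, ‖x‖ ^ n * exp (-‖x‖ ^ 2) =
      √π ^ finrank ℝ E * Gamma ((n + finrank ℝ E) / 2) / Gamma (finrank ℝ E / 2) := by
  rw [integral_fun_norm_addHaar volume (fun y ↦ y ^ n * exp (-y ^ 2))]
  set d := finrank ℝ E
  have hd : 1 ≤ d := finrank_pos
  have h_radial : ∫ y in Ioi (0 : ℝ), y ^ (d - 1) • (y ^ n * exp (-y ^ 2)) =
      Gamma ((n + d) / 2) / 2 := by
    simp_rw [smul_eq_mul, ← mul_assoc, ← pow_add, integral_Ioi_pow_mul_exp_neg_sq]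
    congr 2
    push_cast [Nat.cast_sub hd]
    ring
  have h_ball : volume.real (Metric.ball (0 : E) 1) = √π ^ d / Gamma (d / 2 + 1) := by
    rw [measureReal_def, InnerProductSpace.volume_ball, ENNReal.ofReal_one, one_pow, one_mul,
      ENNReal.toReal_ofReal (by positivity)]
  have hd_pos : (0 : ℝ) < d := by exact_mod_cast hd
  rw [h_radial, h_ball, Gamma_add_one (by positivity), nsmul_eq_mul, smul_eq_mul]
  field_simp

end InnerProductSpace

lemma EuclideanSpace.integral_coord_pow_mul_exp_neg_norm_sq {ι : Type*} [Fintype ι]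
    [DecidableEq ι] (i : ι) (k : ℕ) :
    ∫ x : EuclideanSpace ℝ ι, x i ^ (2 * k) * exp (-‖x‖ ^ 2) =
      Gamma (k + 1 / 2) * √π ^ (Fintype.card ι - 1) := by
  let f (j : ι) (t : ℝ) : ℝ := (if j = i then t ^ (2 * k) else 1) * exp (-t ^ 2)
  have h_prod (y : ι → ℝ) :
      (WithLp.toLp 2 y) i ^ (2 * k) * exp (-‖WithLp.toLp 2 y‖ ^ 2) = ∏ j, f j (y j) := by
    rw [Finset.prod_mul_distrib, Fintype.prod_ite_eq', ← exp_sum, EuclideanSpace.norm_sq_eq]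
    simp [Finset.sum_neg_distrib]
  have h_factor (j : ι) : ∫ t, f j t = if j = i then Gamma (k + 1 / 2) else √π := by
    split_ifs with hj
    · simp [f, hj, integral_pow_two_mul_mul_exp_neg_sq]
    · simpa [f, hj] using integral_gaussian 1
  rw [← (EuclideanSpace.volume_preserving_symm_measurableEquiv_toLp ι).symm.integral_comp'
    (fun x : EuclideanSpace ℝ ι ↦ x i ^ (2 * k) * exp (-‖x‖ ^ 2))]
  simp only [MeasurableEquiv.symm_symm, MeasurableEquiv.coe_toLp, h_prod,
    integral_fintype_prod_volume_eq_prod, h_factor]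
  rw [Fintype.prod_eq_mul_prod_compl i, if_pos rfl, Finset.prod_congr rfl
    (fun j hj ↦ if_neg (Finset.mem_compl.mp hj |>.imp Finset.mem_singleton.mpr)),
    Finset.prod_const, Finset.card_compl, Finset.card_singleton]

section Sphere

variable {d : ℕ} {σ : Measure (Metric.sphere (0 : EuclideanSpace ℝ (Fin d)) 1)}

local notation "E" => EuclideanSpace ℝ (Fin d)

lemma integral_comp_sphereMap (hinv : ∀ f : E ≃ₗᵢ[ℝ] E, σ.map (sphereMap d f) = σ)
    (f : E ≃ₗᵢ[ℝ] E) {g : Metric.sphere (0 : E) 1 → ℝ} (hg : AEStronglyMeasurable g σ) :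
    ∫ u, g (sphereMap d f u) ∂σ = ∫ u, g u ∂σ := by
  have h_cont : Continuous (sphereMap d f) :=
    (f.continuous.comp continuous_subtype_val).subtype_mk _
  conv_rhs => rw [← hinv f]
  rw [integral_map h_cont.aemeasurable (by rwa [hinv f])]

lemma integral_comp_inner_sphere_eq_of_norm_eq
    (hinv : ∀ f : E ≃ₗᵢ[ℝ] E, σ.map (sphereMap d f) = σ) {F : ℝ → ℝ} (hF : Measurable F)
    {a b : E} (hab : ‖a‖ = ‖b‖) :
    ∫ u, F ⟪(u : E), a⟫ ∂σ = ∫ u, F ⟪(u : E), b⟫ ∂σ := by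
  obtain ⟨f, hf⟩ := exists_linearIsometryEquiv_apply_eq hab.symm
  have hg : AEStronglyMeasurable (fun u : Metric.sphere (0 : E) 1 ↦ F ⟪(u : E), a⟫) σ :=
    (hF.comp (continuous_subtype_val.inner continuous_const).measurable).aestronglyMeasurable
  rw [← integral_comp_sphereMap hinv f hg, ← hf]
  simp only [sphereMap, LinearIsometryEquiv.inner_map_map]

lemma integral_inner_pow_sphere_eq_norm_pow_mul
    (hinv : ∀ f : E ≃ₗᵢ[ℝ] E, σ.map (sphereMap d f) = σ) {e : E} (he : ‖e‖ = 1) (n : ℕ)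
    (x : E) :
    ∫ u, ⟪(u : E), x⟫ ^ n ∂σ = ‖x‖ ^ n * ∫ u, ⟪(u : E), e⟫ ^ n ∂σ := by
  rw [integral_comp_inner_sphere_eq_of_norm_eq hinv (F := (· ^ n)) (continuous_pow n).measurable
    (b := ‖x‖ • e) (by rw [norm_smul, he, norm_norm, mul_one])]
  simp_rw [real_inner_smul_right, mul_pow]
  exact integral_const_mul _ _

lemma integral_inner_pow_mul_exp_neg_norm_sq_eq_mul [IsProbabilityMeasure σ]
    (hinv : ∀ f : E ≃ₗᵢ[ℝ] E, σ.map (sphereMap d f) = σ) {e : E} (he : ‖e‖ = 1) (n : ℕ) :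
    ∫ x : E, ⟪e, x⟫ ^ n * exp (-‖x‖ ^ 2) =
      (∫ u, ⟪(u : E), e⟫ ^ n ∂σ) * ∫ x : E, ‖x‖ ^ n * exp (-‖x‖ ^ 2) := by
  have : Nontrivial E := nontrivial_of_ne e 0 (by rw [← norm_ne_zero_iff, he]; exact one_ne_zero)
  have h_int : Integrable (fun p : Metric.sphere (0 : E) 1 × E ↦
      ⟪(p.1 : E), p.2⟫ ^ n * exp (-‖p.2‖ ^ 2)) (σ.prod volume) := by
    refine ((integrable_norm_pow_mul_exp_neg_norm_sq n).comp_snd σ).mono' (by fun_prop)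
      (.of_forall fun p ↦ ?_)
    rw [norm_mul, norm_pow, Real.norm_eq_abs, Real.norm_of_nonneg (exp_pos _).le]
    gcongr
    exact abs_real_inner_le_norm_of_mem_sphere p.1 p.2
  have h_inner (u : Metric.sphere (0 : E) 1) :
      ∫ x : E, ⟪(u : E), x⟫ ^ n * exp (-‖x‖ ^ 2) = ∫ x : E, ⟪e, x⟫ ^ n * exp (-‖x‖ ^ 2) :=
    integral_inner_norm_eq_of_norm_eq (by rw [norm_eq_of_mem_sphere, he])
      (fun s r ↦ s ^ n * exp (-r ^ 2))
  calc ∫ x : E, ⟪e, x⟫ ^ n * exp (-‖x‖ ^ 2)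
      = ∫ u, (∫ x : E, ⟪(u : E), x⟫ ^ n * exp (-‖x‖ ^ 2)) ∂σ := by simp [h_inner]
    _ = ∫ x : E, ∫ u, ⟪(u : E), x⟫ ^ n * exp (-‖x‖ ^ 2) ∂σ := integral_integral_swap h_int
    _ = ∫ x : E, (∫ u, ⟪(u : E), e⟫ ^ n ∂σ) * (‖x‖ ^ n * exp (-‖x‖ ^ 2)) := by
        refine integral_congr_ae (.of_forall fun x ↦ ?_)
        dsimp only
        rw [integral_mul_const, integral_inner_pow_sphere_eq_norm_pow_mul hinv he n]
        ring
    _ = _ := integral_const_mul _ _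

lemma integral_inner_single_pow_sphere [IsProbabilityMeasure σ]
    (hinv : ∀ f : E ≃ₗᵢ[ℝ] E, σ.map (sphereMap d f) = σ) (i : Fin d) (k : ℕ) :
    ∫ u, ⟪(u : E), EuclideanSpace.single i 1⟫ ^ (2 * k) ∂σ =
      (2 * k).factorial * Gamma (d / 2) / (4 ^ k * k.factorial * Gamma (k + d / 2)) := by
  have he : ‖(EuclideanSpace.single i 1 : E)‖ = 1 := by simp
  have : Nonempty (Fin d) := ⟨i⟩
  have h := integral_inner_pow_mul_exp_neg_norm_sq_eq_mul hinv he (2 * k)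
  simp only [EuclideanSpace.inner_single_left, map_one, one_mul,
    EuclideanSpace.integral_coord_pow_mul_exp_neg_norm_sq, Fintype.card_fin,
    integral_norm_pow_mul_exp_neg_norm_sq, finrank_euclideanSpace_fin] at h
  rw [Real.Gamma_nat_add_half_eq_factorial, ← pow_sub_one_mul i.pos.ne',
    show (((2 * k : ℕ) : ℝ) + d) / 2 = k + d / 2 by push_cast; ring] at h
  have hd : (0 : ℝ) < d := by exact_mod_cast i.pos
  have hΓ : 0 < Gamma (k + d / 2) := Gamma_pos_of_pos (by positivity)
  field_simp at h ⊢
  exact h.symm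

end Sphere

/-- The spherical average of `cos⟨u, z⟩` (with respect to the uniform probability measure on
the unit sphere, characterized as a rotation-invariant Borel probability measure) equals the
Bessel-type power series `Σ_k (−1)^k ‖z‖^(2k) Γ(d/2) / (4^k k! Γ(k + d/2))`. -/
theorem sphere_average_cos (d : ℕ) (hd : 1 ≤ d)
    (σ : Measure (Metric.sphere (0 : EuclideanSpace ℝ (Fin d)) 1)) [IsProbabilityMeasure σ]
    (hinv : ∀ f : EuclideanSpace ℝ (Fin d) ≃ₗᵢ[ℝ] EuclideanSpace ℝ (Fin d),
      σ.map (sphereMap d f) = σ)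
    (z : EuclideanSpace ℝ (Fin d)) :
    ∫ u, Real.cos (∑ i, (u : EuclideanSpace ℝ (Fin d)) i * z i) ∂σ =
      ∑' k : ℕ,
        (-1 : ℝ) ^ k * ‖z‖ ^ (2 * k) * Real.Gamma ((d : ℝ) / 2) /
          (4 ^ k * (Nat.factorial k) * Real.Gamma ((k : ℝ) + d / 2)) := by
  have h_inner (u : Metric.sphere (0 : EuclideanSpace ℝ (Fin d)) 1) :
      ∑ j, (u : EuclideanSpace ℝ (Fin d)) j * z j = ⟪(u : EuclideanSpace ℝ (Fin d)), z⟫ := by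
    simp [PiLp.inner_apply, mul_comm]
  simp_rw [h_inner]
  rw [integral_cos_eq_tsum
    (continuous_subtype_val.inner continuous_const).aestronglyMeasurable
    (abs_real_inner_le_norm_of_mem_sphere · z)]
  refine tsum_congr fun k ↦ ?_
  rw [integral_inner_pow_sphere_eq_norm_pow_mul hinv (e := EuclideanSpace.single ⟨0, hd⟩ 1)
    (by simp), integral_inner_single_pow_sphere hinv ⟨0, hd⟩ k]
  field_simp
end
end
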